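/- arXiv:1804.05710 — 3 statements merged into one kernel-verified Lean document; each statement's English description precedes it below -/
import Mathlib

section
/- Let f₁, f₂ ∈ ℂ[x₀,…,xₙ] be linearly independent homogeneous polynomials of degree d and let k ≥ d. There exist ℂ-linearly independent homogeneous polynomials g₁, g₂ of degree k−d with g₁·f₁ + g₂·f₂ = 0 if and only if deg gcd(f₁, f₂) ≥ 2d − k. -/
open MvPolynomial

noncomputable section SyzygyAux

variable {σ : Type*}

/-- The algebra map recording homogeneous components as `Polynomial` coefficients. -/
def Phi : MvPolynomial σ ℂ →ₐ[ℂ] Polynomial (MvPolynomial σ ℂ) :=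
  MvPolynomial.aeval (fun i => Polynomial.C (MvPolynomial.X i) * Polynomial.X)

lemma Phi_monomial (d : σ →₀ ℕ) (c : ℂ) :
    Phi (monomial d c) = Polynomial.C (monomial d c) * Polynomial.X ^ d.degree := by
  classical
  rw [Phi, aeval_monomial]
  have h1 : (d.prod fun i k => (Polynomial.C (X i : MvPolynomial σ ℂ) * Polynomial.X) ^ k)
      = Polynomial.C (d.prod fun i k => (X i : MvPolynomial σ ℂ) ^ k)
        * Polynomial.X ^ d.degree := by
    rw [Finsupp.prod, Finsupp.prod, Finsupp.degree]
    simp only [mul_pow, ← Polynomial.C_pow]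
    rw [Finset.prod_mul_distrib, map_prod, Finset.prod_pow_eq_pow_sum]
    rfl
  rw [h1, MvPolynomial.monomial_eq, Polynomial.algebraMap_apply, MvPolynomial.algebraMap_eq]
  simp only [map_mul]
  ring

lemma homogeneousComponent_monomial' (i : ℕ) (d : σ →₀ ℕ) (c : ℂ) :
    homogeneousComponent i (monomial d c) = if d.degree = i then monomial d c else 0 := by
  classical
  ext e
  rw [coeff_homogeneousComponent, apply_ite (coeff e), coeff_monomial, MvPolynomial.coeff_zero]
  by_cases hde : d = e
  · subst hde; simp
  · simp [coeff_monomial, hde]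

lemma coeff_Phi (p : MvPolynomial σ ℂ) (i : ℕ) :
    (Phi p).coeff i = homogeneousComponent i p := by
  classical
  induction p using MvPolynomial.induction_on' with
  | monomial d c =>
      rw [Phi_monomial, Polynomial.coeff_C_mul, Polynomial.coeff_X_pow,
        homogeneousComponent_monomial']
      by_cases h : i = d.degree
      · simp [h]
      · simp [h, Ne.symm h]
  | add p q hp hq =>
      rw [map_add, Polynomial.coeff_add, map_add, hp, hq]

lemma Phi_ne_zero {p : MvPolynomial σ ℂ} (hp : p ≠ 0) : Phi p ≠ 0 := by
  intro h
  apply hp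
  ext d
  have h2 : homogeneousComponent d.degree p = 0 := by
    rw [← coeff_Phi, h, Polynomial.coeff_zero]
  have h3 := congrArg (MvPolynomial.coeff d) h2
  rwa [coeff_homogeneousComponent, if_pos rfl, MvPolynomial.coeff_zero] at h3

lemma isHomogeneous_of_components {p : MvPolynomial σ ℂ} {a : ℕ}
    (h : ∀ i, i ≠ a → homogeneousComponent i p = 0) : p.IsHomogeneous a := by
  have hp : p = homogeneousComponent a p := by
    ext d
    rw [coeff_homogeneousComponent]
    split_ifs with hd
    · rfl
    · have h2 := congrArg (MvPolynomial.coeff d) (h d.degree hd)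
      rwa [coeff_homogeneousComponent, if_pos rfl, MvPolynomial.coeff_zero] at h2
  rw [hp]
  exact homogeneousComponent_isHomogeneous a p

/-- In a domain, factors of nonzero homogeneous polynomials are homogeneous. -/
lemma homog_factor {p q : MvPolynomial σ ℂ} {m : ℕ} (hp : p ≠ 0) (hq : q ≠ 0)
    (h : (p * q).IsHomogeneous m) :
    ∃ a b, a + b = m ∧ p.IsHomogeneous a ∧ q.IsHomogeneous b := by
  classical
  have hpq : p * q ≠ 0 := mul_ne_zero hp hq
  have hPhi : Phi p * Phi q = Polynomial.monomial m (p * q) := by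
    rw [← map_mul, ← Polynomial.C_mul_X_pow_eq_monomial]
    ext i
    rw [coeff_Phi, Polynomial.coeff_C_mul, Polynomial.coeff_X_pow]
    rw [homogeneousComponent_of_mem h]
    by_cases hi : i = m
    · simp [hi]
    · simp [hi]
  have hP := Phi_ne_zero hp
  have hQ := Phi_ne_zero hq
  have hdeg : (Phi p).natDegree + (Phi q).natDegree = m := by
    rw [← Polynomial.natDegree_mul hP hQ, hPhi, Polynomial.natDegree_monomial, if_neg hpq]
  have htdeg : (Phi p).natTrailingDegree + (Phi q).natTrailingDegree = m := by
    rw [← Polynomial.natTrailingDegree_mul hP hQ, hPhi,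
      Polynomial.natTrailingDegree_monomial hpq]
  have h1 := Polynomial.natTrailingDegree_le_natDegree (Phi p)
  have h2 := Polynomial.natTrailingDegree_le_natDegree (Phi q)
  have hpe : (Phi p).natTrailingDegree = (Phi p).natDegree := by omega
  have hqe : (Phi q).natTrailingDegree = (Phi q).natDegree := by omega
  refine ⟨(Phi p).natDegree, (Phi q).natDegree, hdeg, ?_, ?_⟩
  · apply isHomogeneous_of_components
    intro i hi
    rw [← coeff_Phi]
    rcases lt_or_gt_of_ne hi with hlt | hgt
    · exact Polynomial.coeff_eq_zero_of_lt_natTrailingDegree (by omega)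
    · exact Polynomial.coeff_eq_zero_of_natDegree_lt hgt
  · apply isHomogeneous_of_components
    intro i hi
    rw [← coeff_Phi]
    rcases lt_or_gt_of_ne hi with hlt | hgt
    · exact Polynomial.coeff_eq_zero_of_lt_natTrailingDegree (by omega)
    · exact Polynomial.coeff_eq_zero_of_natDegree_lt hgt

end SyzygyAux

/-- For `f₁, f₂` linearly independent homogeneous of degree `d` and
`k ≥ d`, there exist ℂ-linearly independent homogeneous `g₁, g₂` of degree `k−d`
with `g₁f₁ + g₂f₂ = 0` iff `deg gcd(f₁,f₂) ≥ 2d−k`, the latter expressed as the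
existence of a common homogeneous divisor of degree at least `2d−k`. -/
theorem syzygy_linearIndependent_iff_gcd_degree (n d k : ℕ) (hdk : d ≤ k)
    (f₁ f₂ : MvPolynomial (Fin (n + 1)) ℂ)
    (hf₁ : f₁.IsHomogeneous d) (hf₂ : f₂.IsHomogeneous d)
    (hind : LinearIndependent ℂ ![f₁, f₂]) :
    (∃ g₁ g₂ : MvPolynomial (Fin (n + 1)) ℂ,
        g₁.IsHomogeneous (k - d) ∧ g₂.IsHomogeneous (k - d) ∧
        LinearIndependent ℂ ![g₁, g₂] ∧ g₁ * f₁ + g₂ * f₂ = 0) ↔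
    (∃ (e : ℕ) (h : MvPolynomial (Fin (n + 1)) ℂ),
        h.IsHomogeneous e ∧ 2 * d - k ≤ e ∧ h ∣ f₁ ∧ h ∣ f₂) := by
  classical
  letI : NormalizationMonoid (MvPolynomial (Fin (n + 1)) ℂ) :=
    UniqueFactorizationMonoid.normalizationMonoid.toNormalizationMonoid
  letI : GCDMonoid (MvPolynomial (Fin (n + 1)) ℂ) :=
    UniqueFactorizationMonoid.toGCDMonoid _
  have hf1ne : f₁ ≠ 0 := by
    have := hind.ne_zero 0; simpa using this
  have hf2ne : f₂ ≠ 0 := by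
    have := hind.ne_zero 1; simpa using this
  constructor
  · rintro ⟨g₁, g₂, hg₁, hg₂, hgind, heq⟩
    have hg1ne : g₁ ≠ 0 := by
      have := hgind.ne_zero 0; simpa using this
    have hg2ne : g₂ ≠ 0 := by
      have := hgind.ne_zero 1; simpa using this
    obtain ⟨b₁, b₂, e1, e2, hu⟩ := extract_gcd g₁ g₂
    set c := gcd g₁ g₂ with hc_def
    have hcne : c ≠ 0 := by
      intro hc0; apply hg1ne; rw [e1, hc0, zero_mul]
    have hb1ne : b₁ ≠ 0 := by
      intro hb0; apply hg1ne; rw [e1, hb0, mul_zero]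
    have key : b₁ * f₁ = -(b₂ * f₂) := by
      apply mul_left_cancel₀ hcne
      rw [e1, e2] at heq
      linear_combination heq
    have hrp : IsRelPrime b₁ b₂ := gcd_isUnit_iff_isRelPrime.mp hu
    have hdvd : b₁ ∣ b₂ * f₂ := ⟨-f₁, by linear_combination key⟩
    obtain ⟨h, hh⟩ := hrp.dvd_of_dvd_mul_left hdvd
    have hhne : h ≠ 0 := by
      intro h0; apply hf2ne; rw [hh, h0, mul_zero]
    have hf1eq : f₁ = -(b₂ * h) := by
      apply mul_left_cancel₀ hb1ne
      linear_combination key - b₂ * hh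
    obtain ⟨β, e, hβe, hb₁hom, hhhom⟩ := homog_factor hb1ne hhne
      (show (b₁ * h).IsHomogeneous d by rw [← hh]; exact hf₂)
    obtain ⟨γ, β', hγβ, hchom, hb₁hom'⟩ := homog_factor hcne hb1ne
      (show (c * b₁).IsHomogeneous (k - d) by rw [← e1]; exact hg₁)
    have hββ' : β' = β := hb₁hom'.inj_right hb₁hom hb1ne
    refine ⟨e, h, hhhom, by omega, ⟨-b₂, by linear_combination hf1eq⟩,
      ⟨b₁, by linear_combination hh⟩⟩
  · rintro ⟨e, h, hhom, hek, ⟨a₁, ha₁⟩, ⟨a₂, ha₂⟩⟩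
    have hhne : h ≠ 0 := by
      intro h0; apply hf1ne; rw [ha₁, h0, zero_mul]
    have ha1ne : a₁ ≠ 0 := by
      intro h0; apply hf1ne; rw [ha₁, h0, mul_zero]
    have ha2ne : a₂ ≠ 0 := by
      intro h0; apply hf2ne; rw [ha₂, h0, mul_zero]
    obtain ⟨α, β₁, hαβ, hhhom', ha₁hom⟩ := homog_factor hhne ha1ne
      (show (h * a₁).IsHomogeneous d by rw [← ha₁]; exact hf₁)
    obtain ⟨α', β₂, hαβ', hhhom'', ha₂hom⟩ := homog_factor hhne ha2ne
      (show (h * a₂).IsHomogeneous d by rw [← ha₂]; exact hf₂)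
    have hαe : α = e := hhhom'.inj_right hhom hhne
    have hα'e : α' = e := hhhom''.inj_right hhom hhne
    have hββ : β₂ = β₁ := by omega
    rw [hββ] at ha₂hom
    have hβle : β₁ ≤ k - d := by omega
    set m : MvPolynomial (Fin (n + 1)) ℂ := X 0 ^ (k - d - β₁) with hm_def
    have hmhom : m.IsHomogeneous (k - d - β₁) := MvPolynomial.isHomogeneous_X_pow 0 _
    have hmne : m ≠ 0 := pow_ne_zero _ (X_ne_zero 0)
    refine ⟨m * a₂, -(m * a₁), ?_, ?_, ?_, by linear_combination (m * a₂) * ha₁ - (m * a₁) * ha₂⟩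
    · have := hmhom.mul ha₂hom
      rwa [Nat.sub_add_cancel hβle] at this
    · apply MvPolynomial.IsHomogeneous.neg
      have := hmhom.mul ha₁hom
      rwa [Nat.sub_add_cancel hβle] at this
    · rw [LinearIndependent.pair_iff] at hind ⊢
      intro s t hst
      rw [smul_eq_C_mul, smul_eq_C_mul] at hst
      have key2 : m * (C s * a₂ - C t * a₁) = 0 := by linear_combination hst
      have key3 : C s * a₂ - C t * a₁ = 0 :=
        (mul_eq_zero.mp key2).resolve_left hmne
      have key4 : t • f₁ + (-s) • f₂ = 0 := by
        rw [smul_eq_C_mul, smul_eq_C_mul, map_neg]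
        linear_combination (-h) * key3 + C t * ha₁ - C s * ha₂
      obtain ⟨ht, hs⟩ := hind t (-s) key4
      exact ⟨neg_eq_zero.mp hs, ht⟩
end

section
/- Let f₁, f₂ ∈ ℂ[x₀,…,xₙ] be linearly independent homogeneous polynomials of degree d. The ℂ-vector space of pairs (g₁, g₂) of homogeneous linear forms (or zero) satisfying g₁·f₁ + g₂·f₂ = 0 has dimension at most 1. -/
/-!
If `(a, b) ≠ 0` is a syzygy of linear forms then `a ≠ 0`, and eliminating `f₂` against a
second syzygy `(c, e)` gives `a e = b c`. A nonzero linear form is prime, and it cannot divide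
`b`: otherwise `b = λ a` and `a (f₁ + λ f₂) = 0`, against linear independence. Hence `a ∣ c`,
which by degrees forces `c = μ a`, and then `e = μ b`.
-/

namespace MvPolynomial

variable {σ : Type*}

theorem IsHomogeneous.exists_eq_C_mul_of_dvd {R : Type*} [CommRing R] [IsDomain R]
    {a c : MvPolynomial σ R} {m : ℕ} (ha : a.IsHomogeneous m) (hc : c.IsHomogeneous m)
    (ha0 : a ≠ 0) (hdvd : a ∣ c) : ∃ μ : R, c = C μ * a := by
  obtain ⟨w, rfl⟩ := hdvd
  obtain rfl | hw0 := eq_or_ne w 0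
  · exact ⟨0, by simp⟩
  have hdeg := totalDegree_mul_of_isDomain ha0 hw0
  rw [hc.totalDegree (mul_ne_zero ha0 hw0), ha.totalDegree ha0] at hdeg
  have hw : w = C (w.coeff 0) := totalDegree_eq_zero_iff_eq_C.mp (by omega)
  exact ⟨w.coeff 0, by rw [← hw, mul_comm]⟩

variable {K : Type*} [Field K]

theorem prime_of_isHomogeneous_one {a : MvPolynomial σ K}
    (ha : a.IsHomogeneous 1) (ha0 : a ≠ 0) : Prime a := by
  refine (irreducible_of_totalDegree_eq_one (ha.totalDegree ha0) fun x hx => ?_).prime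
  obtain ⟨i, hi⟩ := ne_zero_iff.mp ha0
  exact isUnit_iff_ne_zero.mpr (ne_zero_of_dvd_ne_zero hi (hx i))

theorem not_dvd_of_syzygy {a b f₁ f₂ : MvPolynomial σ K} {m : ℕ}
    (hind : LinearIndependent K ![f₁, f₂]) (ha : a.IsHomogeneous m) (hb : b.IsHomogeneous m)
    (ha0 : a ≠ 0) (hab : a * f₁ + b * f₂ = 0) : ¬ a ∣ b := by
  intro hdvd
  obtain ⟨μ, rfl⟩ := ha.exists_eq_C_mul_of_dvd hb ha0 hdvd
  have hrel : (1 : K) • f₁ + μ • f₂ = 0 := by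
    refine (mul_eq_zero.mp ?_).resolve_left ha0
    rw [one_smul, smul_eq_C_mul, ← hab]
    ring
  exact one_ne_zero (LinearIndependent.pair_iff.mp hind 1 μ hrel).1

theorem exists_smul_eq_of_syzygy {a b c e f₁ f₂ : MvPolynomial σ K}
    (hind : LinearIndependent K ![f₁, f₂]) (ha : a.IsHomogeneous 1) (hb : b.IsHomogeneous 1)
    (hc : c.IsHomogeneous 1) (hab : a * f₁ + b * f₂ = 0) (hce : c * f₁ + e * f₂ = 0)
    (hab0 : (a, b) ≠ 0) : ∃ μ : K, μ • (a, b) = (c, e) := by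
  have hf₁ : f₁ ≠ 0 := by simpa using hind.ne_zero 0
  have hf₂ : f₂ ≠ 0 := by simpa using hind.ne_zero 1
  have ha0 : a ≠ 0 := by
    rintro rfl
    have hb0 : b = 0 := (mul_eq_zero.mp (by simpa using hab)).resolve_right hf₂
    exact hab0 (by simp [hb0])
  have hcross : a * e = b * c := by
    refine sub_eq_zero.mp ((mul_eq_zero.mp ?_).resolve_right hf₁)
    linear_combination e * hab - b * hce
  have hac : a ∣ c :=
    ((prime_of_isHomogeneous_one ha ha0).dvd_or_dvd ⟨e, hcross.symm⟩).resolve_left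
      (not_dvd_of_syzygy hind ha hb ha0 hab)
  obtain ⟨μ, rfl⟩ := ha.exists_eq_C_mul_of_dvd hc ha0 hac
  have he : e = C μ * b := mul_left_cancel₀ ha0 (by rw [hcross]; ring)
  exact ⟨μ, by simp [smul_eq_C_mul, he]⟩

end MvPolynomial

open MvPolynomial

theorem syzygy_space_rank_le_one_general (n : ℕ)
    (f₁ f₂ : MvPolynomial (Fin (n + 1)) ℂ)
    (hind : LinearIndependent ℂ ![f₁, f₂])
    (S : Submodule ℂ (MvPolynomial (Fin (n + 1)) ℂ × MvPolynomial (Fin (n + 1)) ℂ))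
    (hS : S = (homogeneousSubmodule (Fin (n + 1)) ℂ 1).prod
            (homogeneousSubmodule (Fin (n + 1)) ℂ 1) ⊓
          LinearMap.ker ((LinearMap.mulRight ℂ f₁).coprod (LinearMap.mulRight ℂ f₂))) :
    Module.rank ℂ S ≤ 1 := by
  have mem_S : ∀ {a b}, (a, b) ∈ S ↔
      (a.IsHomogeneous 1 ∧ b.IsHomogeneous 1) ∧ a * f₁ + b * f₂ = 0 := by
    simp [hS, mem_homogeneousSubmodule]
  rw [rank_submodule_le_one_iff']
  obtain rfl | hS0 := eq_or_ne S ⊥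
  · exact ⟨0, bot_le⟩
  · obtain ⟨⟨a, b⟩, hv, hv0⟩ := Submodule.exists_mem_ne_zero_of_ne_bot hS0
    obtain ⟨⟨ha, hb⟩, hab⟩ := mem_S.mp hv
    refine ⟨(a, b), Submodule.le_span_singleton_iff.mpr fun ⟨c, e⟩ hw => ?_⟩
    obtain ⟨⟨hc, -⟩, hce⟩ := mem_S.mp hw
    exact exists_smul_eq_of_syzygy hind ha hb hc hab hce hv0

/-- For `f₁, f₂` linearly independent homogeneous of degree `d`,
the space of pairs `(g₁, g₂)` of linear forms (or zero) with `g₁f₁ + g₂f₂ = 0`,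
i.e. the kernel of `(g₁,g₂) ↦ g₁f₁ + g₂f₂` intersected with the space of pairs of
degree-1 homogeneous polynomials, has dimension at most 1. -/
theorem syzygy_space_rank_le_one (n d : ℕ)
    (f₁ f₂ : MvPolynomial (Fin (n + 1)) ℂ)
    (hf₁ : f₁.IsHomogeneous d) (hf₂ : f₂.IsHomogeneous d)
    (hind : LinearIndependent ℂ ![f₁, f₂])
    (S : Submodule ℂ (MvPolynomial (Fin (n + 1)) ℂ × MvPolynomial (Fin (n + 1)) ℂ))
    (hS : S = (homogeneousSubmodule (Fin (n + 1)) ℂ 1).prod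
            (homogeneousSubmodule (Fin (n + 1)) ℂ 1) ⊓
          LinearMap.ker ((LinearMap.mulRight ℂ f₁).coprod (LinearMap.mulRight ℂ f₂))) :
    Module.rank ℂ S ≤ 1 :=
  syzygy_space_rank_le_one_general n f₁ f₂ hind S hS
end

section
/- Let f₁, f₂ ∈ ℂ[x₀,…,xₙ] be linearly independent homogeneous polynomials of degree d ≥ 1. There exist linear forms g₁, g₂, not both zero, with g₁f₁ + g₂f₂ = 0 if and only if there exist a homogeneous polynomial h of degree d−1 and linear forms ℓ₁, ℓ₂ with f₁ = ℓ₁·h and f₂ = ℓ₂·h. -/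
/-!
A nonzero linear form `g₂` is prime, and `g₂ ∣ g₁ f₁` by the syzygy. It cannot divide `g₁`: then
`g₁ = r g₂` for a scalar `r`, and cancelling `g₂` leaves `r f₁ + f₂ = 0`. Hence `f₁ = g₂ h`,
cancelling `g₂` again gives `f₂ = -g₁ h`, and `h` is homogeneous of degree `d - 1` because
`g₂ h` is homogeneous of degree `d`.
-/

open MvPolynomial

namespace MvPolynomial

variable {σ R K : Type*}

theorem homogeneousComponent_mul_of_isHomogeneous_left [CommSemiring R]
    {p : MvPolynomial σ R} {i : ℕ} (hp : p.IsHomogeneous i) (k : ℕ) (q : MvPolynomial σ R) :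
    homogeneousComponent (i + k) (p * q) = p * homogeneousComponent k q := by
  induction q using MvPolynomial.induction_on' with
  | monomial d c =>
    have hpd := hp.mul (isHomogeneous_monomial (n := d.degree) c rfl)
    rw [homogeneousComponent_of_mem hpd,
      homogeneousComponent_of_mem (isHomogeneous_monomial (n := d.degree) c rfl)]
    split_ifs <;> simp_all
  | add q q' hq hq' => simp only [mul_add, map_add, hq, hq']

theorem IsHomogeneous.of_mul_left [CommSemiring R] [NoZeroDivisors R]
    {p q : MvPolynomial σ R} {i j : ℕ}
    (hp : p.IsHomogeneous i) (hp0 : p ≠ 0) (hpq : (p * q).IsHomogeneous j) :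
    q.IsHomogeneous (j - i) := by
  intro m hm
  rw [Pi.one_def, ← Finsupp.degree_eq_weight_one]
  by_contra hne
  have hcomp : homogeneousComponent m.degree q ≠ 0 := fun h0 => hm <| by
    simpa [coeff_homogeneousComponent] using congr_arg (coeff m) h0
  apply mul_ne_zero hp0 hcomp
  rw [← homogeneousComponent_mul_of_isHomogeneous_left hp, homogeneousComponent_of_mem hpq,
    if_neg (by omega)]

theorem IsHomogeneous.exists_eq_C_mul_of_dvd_s13 [CommSemiring R] [NoZeroDivisors R]
    {p q : MvPolynomial σ R} {n : ℕ} (hp : p.IsHomogeneous n) (hp0 : p ≠ 0)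
    (hq : q.IsHomogeneous n) (hpq : p ∣ q) : ∃ r, q = C r * p := by
  obtain ⟨c, rfl⟩ := hpq
  have hc : c.IsHomogeneous 0 := by simpa using hp.of_mul_left hp0 hq
  rw [← totalDegree_zero_iff_isHomogeneous, totalDegree_eq_zero_iff_eq_C] at hc
  exact ⟨coeff 0 c, by rw [mul_comm, ← hc]⟩

theorem prime_of_isHomogeneous_one_s13 [Field K] {p : MvPolynomial σ K}
    (hp : p.IsHomogeneous 1) (hp0 : p ≠ 0) : Prime p := by
  refine UniqueFactorizationMonoid.irreducible_iff_prime.mp <|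
    irreducible_of_totalDegree_eq_one (hp.totalDegree hp0) fun x hx => ?_
  refine isUnit_iff_ne_zero.mpr fun hx0 => hp0 <| MvPolynomial.ext _ _ fun m => ?_
  simpa [hx0] using hx m

theorem exists_common_factor_of_linear_syzygy [Field K] {f₁ f₂ g₁ g₂ : MvPolynomial σ K} {d : ℕ}
    (hf₁ : f₁.IsHomogeneous d) (hind : LinearIndependent K ![f₁, f₂])
    (hg₁ : g₁.IsHomogeneous 1) (hg₂ : g₂.IsHomogeneous 1) (hg₂0 : g₂ ≠ 0)
    (hsyz : g₁ * f₁ + g₂ * f₂ = 0) :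
    ∃ h, h.IsHomogeneous (d - 1) ∧ f₁ = g₂ * h ∧ f₂ = -g₁ * h := by
  have hdvd : g₂ ∣ g₁ * f₁ := ⟨-f₂, by linear_combination hsyz⟩
  rcases (prime_of_isHomogeneous_one_s13 hg₂ hg₂0).dvd_or_dvd hdvd with ⟨c, hc⟩ | ⟨h, hh⟩
  · obtain ⟨r, rfl⟩ := hg₂.exists_eq_C_mul_of_dvd_s13 hg₂0 hg₁ ⟨c, hc⟩
    have hrel : C r * f₁ + f₂ = 0 :=
      (mul_eq_zero.mp (by linear_combination hsyz : g₂ * (C r * f₁ + f₂) = 0)).resolve_left hg₂0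
    exact absurd (LinearIndependent.pair_iff.mp hind r 1 (by simpa [smul_eq_C_mul] using hrel)).2
      one_ne_zero
  · refine ⟨h, hg₂.of_mul_left hg₂0 (hh ▸ hf₁), hh, ?_⟩
    have hrel : f₂ + g₁ * h = 0 :=
      (mul_eq_zero.mp (by linear_combination hsyz - g₁ * hh : g₂ * (f₂ + g₁ * h) = 0)).resolve_left
        hg₂0
    linear_combination hrel

end MvPolynomial

theorem syzygy_iff_common_factor_general (n d : ℕ)
    (f₁ f₂ : MvPolynomial (Fin (n + 1)) ℂ)
    (hf₁ : f₁.IsHomogeneous d)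
    (hind : LinearIndependent ℂ ![f₁, f₂]) :
    (∃ g₁ g₂ : MvPolynomial (Fin (n + 1)) ℂ,
        g₁.IsHomogeneous 1 ∧ g₂.IsHomogeneous 1 ∧ (g₁ ≠ 0 ∨ g₂ ≠ 0) ∧
        g₁ * f₁ + g₂ * f₂ = 0) ↔
    (∃ h ℓ₁ ℓ₂ : MvPolynomial (Fin (n + 1)) ℂ,
        h.IsHomogeneous (d - 1) ∧ ℓ₁.IsHomogeneous 1 ∧ ℓ₂.IsHomogeneous 1 ∧
        f₁ = ℓ₁ * h ∧ f₂ = ℓ₂ * h) := by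
  have hf₁0 : f₁ ≠ 0 := by simpa using hind.ne_zero 0
  constructor
  · rintro ⟨g₁, g₂, hg₁, hg₂, hne, hsyz⟩
    have hg₂0 : g₂ ≠ 0 := by
      rintro rfl
      rw [zero_mul, add_zero] at hsyz
      exact mul_ne_zero (hne.resolve_right (not_not.mpr rfl)) hf₁0 hsyz
    obtain ⟨h, hh, he₁, he₂⟩ := exists_common_factor_of_linear_syzygy hf₁ hind hg₁ hg₂ hg₂0 hsyz
    exact ⟨h, g₂, -g₁, hh, hg₂, hg₁.neg, he₁, he₂⟩
  · rintro ⟨h, ℓ₁, ℓ₂, -, hℓ₁, hℓ₂, rfl, rfl⟩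
    exact ⟨ℓ₂, -ℓ₁, hℓ₂, hℓ₁.neg, Or.inr (neg_ne_zero.mpr (left_ne_zero_of_mul hf₁0)), by ring⟩

/-- For `f₁, f₂` linearly independent homogeneous of degree `d ≥ 1`,
there exist linear forms `g₁, g₂`, not both zero, with `g₁f₁ + g₂f₂ = 0` iff
`f₁ = ℓ₁·h`, `f₂ = ℓ₂·h` for some homogeneous `h` of degree `d−1` and linear
forms `ℓ₁, ℓ₂`. -/
theorem syzygy_iff_common_factor (n d : ℕ) (hd : 1 ≤ d)
    (f₁ f₂ : MvPolynomial (Fin (n + 1)) ℂ)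
    (hf₁ : f₁.IsHomogeneous d) (hf₂ : f₂.IsHomogeneous d)
    (hind : LinearIndependent ℂ ![f₁, f₂]) :
    (∃ g₁ g₂ : MvPolynomial (Fin (n + 1)) ℂ,
        g₁.IsHomogeneous 1 ∧ g₂.IsHomogeneous 1 ∧ (g₁ ≠ 0 ∨ g₂ ≠ 0) ∧
        g₁ * f₁ + g₂ * f₂ = 0) ↔
    (∃ h ℓ₁ ℓ₂ : MvPolynomial (Fin (n + 1)) ℂ,
        h.IsHomogeneous (d - 1) ∧ ℓ₁.IsHomogeneous 1 ∧ ℓ₂.IsHomogeneous 1 ∧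
        f₁ = ℓ₁ * h ∧ f₂ = ℓ₂ * h) :=
  syzygy_iff_common_factor_general n d f₁ f₂ hf₁ hind
end
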